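/- arXiv:math/0607484 — 2 statements merged into one kernel-verified Lean document; each statement's English description precedes it below -/
import Mathlib

section
/- Let A : ℝ⁴ → M(m) be matrix-valued, u : ℝ⁴ → ℝᵐ, V : ℝ⁴ → M(m)⊗Λ¹ℝ⁴, w : ℝ⁴ → M(m), W : ℝ⁴ → M(m)⊗Λ¹ℝ⁴, all sufficiently smooth. Then the pointwise identity holds: div[∇(AΔu) − 2∇A·Δu + ΔA·∇u − A w ∇u + ∇A (V·∇u) − A ∇(V·∇u)] = A[Δ²u − Δ(V·∇u) − div(w∇u) − W·∇u] + [∇ΔA + ΔA·V − ∇A·w + A·W]·∇u. -/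
open MeasureTheory Metric Set ENNReal NNReal

noncomputable section

/-- Four dimensional Euclidean space. -/
abbrev E4 : Type := EuclideanSpace ℝ (Fin 4)

/-- The `k`-th partial derivative of a function on `ℝ⁴`. -/
def pd {E : Type*} [NormedAddCommGroup E] [NormedSpace ℝ E] (k : Fin 4) (f : E4 → E) : E4 → E :=
  fun x => fderiv ℝ f x (EuclideanSpace.single k 1)

/-- The Laplacian on `ℝ⁴`. -/
def lap {E : Type*} [NormedAddCommGroup E] [NormedSpace ℝ E] (f : E4 → E) : E4 → E :=
  fun x => ∑ k : Fin 4, pd k (pd k f) x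

/-- The Bilaplacian on `ℝ⁴`. -/
def bilap {E : Type*} [NormedAddCommGroup E] [NormedSpace ℝ E] (f : E4 → E) : E4 → E :=
  lap (lap f)
/-- A matrix (given by its entries) acting on a vector. -/
def mvec {m : ℕ} (M : Fin m → Fin m → ℝ) (v : Fin m → ℝ) : Fin m → ℝ :=
  fun i => ∑ j, M i j * v j

/-- Product of two matrices given by their entries. -/
def mmul {m : ℕ} (M N : Fin m → Fin m → ℝ) : Fin m → Fin m → ℝ :=
  fun i j => ∑ r, M i r * N r j

/-! ### Auxiliary lemmas -/

lemma cdiff {E : Type*} [NormedAddCommGroup E] [NormedSpace ℝ E] {f : E4 → E}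
    (h : ContDiff ℝ (⊤ : ℕ∞) f) (y : E4) : DifferentiableAt ℝ f y :=
  (h.differentiable (by simp)).differentiableAt

lemma contDiff_pd {E : Type*} [NormedAddCommGroup E] [NormedSpace ℝ E]
    (k : Fin 4) {f : E4 → E} (hf : ContDiff ℝ (⊤ : ℕ∞) f) : ContDiff ℝ (⊤ : ℕ∞) (pd k f) :=
  (hf.fderiv_right (m := (⊤ : ℕ∞)) (by simp)).clm_apply contDiff_const

lemma contDiff_lap {E : Type*} [NormedAddCommGroup E] [NormedSpace ℝ E]
    {f : E4 → E} (hf : ContDiff ℝ (⊤ : ℕ∞) f) : ContDiff ℝ (⊤ : ℕ∞) (lap f) :=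
  ContDiff.sum fun k _ => contDiff_pd k (contDiff_pd k hf)

lemma pd_add {E : Type*} [NormedAddCommGroup E] [NormedSpace ℝ E] (k : Fin 4) {f g : E4 → E} {x : E4}
    (hf : DifferentiableAt ℝ f x) (hg : DifferentiableAt ℝ g x) :
    pd k (fun y => f y + g y) x = pd k f x + pd k g x := by
  simp [pd, fderiv_fun_add hf hg]

lemma pd_smul {E : Type*} [NormedAddCommGroup E] [NormedSpace ℝ E] (k : Fin 4) (c : ℝ)
    {f : E4 → E} {x : E4} (hf : DifferentiableAt ℝ f x) :
    pd k (fun y => c • f y) x = c • pd k f x := by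
  simp [pd, fderiv_fun_const_smul hf c]

lemma pd_sum {E : Type*} [NormedAddCommGroup E] [NormedSpace ℝ E] (k : Fin 4) {ι : Type*}
    (s : Finset ι) {f : ι → E4 → E} {x : E4}
    (hf : ∀ i ∈ s, DifferentiableAt ℝ (f i) x) :
    pd k (fun y => ∑ i ∈ s, f i y) x = ∑ i ∈ s, pd k (f i) x := by
  simp [pd, fderiv_fun_sum hf]

lemma pd_mul (k : Fin 4) {f g : E4 → ℝ} {x : E4}
    (hf : DifferentiableAt ℝ f x) (hg : DifferentiableAt ℝ g x) :
    pd k (fun y => f y * g y) x = pd k f x * g x + f x * pd k g x := by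
  simp [pd, fderiv_fun_mul hf hg]; ring

lemma pd_pi {ι : Type*} [Fintype ι] {F : Type*} [NormedAddCommGroup F] [NormedSpace ℝ F]
    (k : Fin 4) {f : E4 → ι → F} {x : E4} (hf : DifferentiableAt ℝ f x) (i : ι) :
    pd k f x i = pd k (fun y => f y i) x := by
  rw [pd, fderiv_pi (fun j => (differentiableAt_pi.mp hf j))]
  rfl

section MvecLemmas
variable {m : ℕ}

lemma mvec_add (M : Fin m → Fin m → ℝ) (v w : Fin m → ℝ) :
    mvec M (v + w) = mvec M v + mvec M w := by
  funext i; simp [mvec, mul_add, Finset.sum_add_distrib]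

lemma mvec_sub (M : Fin m → Fin m → ℝ) (v w : Fin m → ℝ) :
    mvec M (v - w) = mvec M v - mvec M w := by
  funext i; simp [mvec, mul_sub, Finset.sum_sub_distrib]

lemma mvec_add_left (M N : Fin m → Fin m → ℝ) (v : Fin m → ℝ) :
    mvec (M + N) v = mvec M v + mvec N v := by
  funext i; simp [mvec, add_mul, Finset.sum_add_distrib]

lemma mvec_sub_left (M N : Fin m → Fin m → ℝ) (v : Fin m → ℝ) :
    mvec (M - N) v = mvec M v - mvec N v := by
  funext i; simp [mvec, sub_mul, Finset.sum_sub_distrib]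

lemma mvec_sum {ι : Type*} (s : Finset ι) (M : Fin m → Fin m → ℝ) (f : ι → Fin m → ℝ) :
    mvec M (∑ i ∈ s, f i) = ∑ i ∈ s, mvec M (f i) := by
  funext i; simp [mvec, Finset.mul_sum]; rw [Finset.sum_comm]

lemma mvec_sum_left {ι : Type*} (s : Finset ι) (M : ι → Fin m → Fin m → ℝ) (v : Fin m → ℝ) :
    mvec (∑ i ∈ s, M i) v = ∑ i ∈ s, mvec (M i) v := by
  funext i; simp [mvec, Finset.sum_mul]; rw [Finset.sum_comm]

lemma mvec_mmul (M N : Fin m → Fin m → ℝ) (v : Fin m → ℝ) :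
    mvec (mmul M N) v = mvec M (mvec N v) := by
  funext i
  simp only [mvec, mmul, Finset.sum_mul, Finset.mul_sum]
  rw [Finset.sum_comm]
  exact Finset.sum_congr rfl fun r _ => Finset.sum_congr rfl fun j _ => by ring

lemma contDiff_entry {A : E4 → Fin m → Fin m → ℝ} (hA : ContDiff ℝ (⊤ : ℕ∞) A) (i j : Fin m) :
    ContDiff ℝ (⊤ : ℕ∞) (fun y => A y i j) :=
  contDiff_pi.mp (contDiff_pi.mp hA i) j

lemma contDiff_mvec {A : E4 → Fin m → Fin m → ℝ} {f : E4 → Fin m → ℝ}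
    (hA : ContDiff ℝ (⊤ : ℕ∞) A) (hf : ContDiff ℝ (⊤ : ℕ∞) f) :
    ContDiff ℝ (⊤ : ℕ∞) (fun y => mvec (A y) (f y)) := by
  rw [contDiff_pi]
  intro i
  unfold mvec
  exact ContDiff.sum fun j _ => (contDiff_entry hA i j).mul (contDiff_pi.mp hf j)

lemma diffAt_entry {A : E4 → Fin m → Fin m → ℝ} {x : E4} (hA : DifferentiableAt ℝ A x)
    (i j : Fin m) : DifferentiableAt ℝ (fun y => A y i j) x :=
  differentiableAt_pi.mp (differentiableAt_pi.mp hA i) j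

lemma diffAt_mvec {A : E4 → Fin m → Fin m → ℝ} {f : E4 → Fin m → ℝ} {x : E4}
    (hA : DifferentiableAt ℝ A x) (hf : DifferentiableAt ℝ f x) :
    DifferentiableAt ℝ (fun y => mvec (A y) (f y)) x := by
  rw [differentiableAt_pi]
  intro i
  unfold mvec
  exact DifferentiableAt.fun_sum fun j _ => (diffAt_entry hA i j).fun_mul (differentiableAt_pi.mp hf j)

lemma pd_mvec (k : Fin 4) {A : E4 → Fin m → Fin m → ℝ} {f : E4 → Fin m → ℝ} {x : E4}
    (hA : DifferentiableAt ℝ A x) (hf : DifferentiableAt ℝ f x) :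
    pd k (fun y => mvec (A y) (f y)) x = mvec (pd k A x) (f x) + mvec (A x) (pd k f x) := by
  funext i
  rw [pd_pi k (diffAt_mvec hA hf) i]
  have h2 : (fun y => mvec (A y) (f y) i) = fun y => ∑ j, A y i j * f y j := rfl
  rw [h2, pd_sum k Finset.univ
    (fun j _ => (diffAt_entry hA i j).fun_mul (differentiableAt_pi.mp hf j))]
  have h3 : ∀ j, pd k (fun y => A y i j * f y j) x
      = pd k (fun y => A y i j) x * f x j + A x i j * pd k (fun y => f y j) x :=
    fun j => pd_mul k (diffAt_entry hA i j) (differentiableAt_pi.mp hf j)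
  simp only [h3]
  have h4 : ∀ j, pd k (fun y => A y i j) x = pd k A x i j := by
    intro j
    rw [pd_pi k hA i]
    exact (pd_pi k (differentiableAt_pi.mp hA i) j).symm
  have h5 : ∀ j, pd k (fun y => f y j) x = pd k f x j :=
    fun j => (pd_pi k hf j).symm
  simp only [h4, h5, mvec, Pi.add_apply, Finset.sum_add_distrib]

end MvecLemmas

/-- The pointwise identity behind the conservation law for fourth order
systems: for sufficiently smooth `A, u, V, w, W` on `ℝ⁴`,
`div[∇(AΔu) − 2∇A Δu + ΔA ∇u − A w ∇u + ∇A (V⋅∇u) − A ∇(V⋅∇u)]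
  = A[Δ²u − Δ(V⋅∇u) − div(w∇u) − W⋅∇u] + [∇ΔA + ΔA V − ∇A w + A W]⋅∇u`. -/
theorem stmt1 {m : ℕ} (A : E4 → Fin m → Fin m → ℝ) (u : E4 → Fin m → ℝ)
    (V : E4 → Fin 4 → Fin m → Fin m → ℝ) (w : E4 → Fin m → Fin m → ℝ)
    (W : E4 → Fin 4 → Fin m → Fin m → ℝ)
    (hA : ContDiff ℝ (⊤ : ℕ∞) A) (hu : ContDiff ℝ (⊤ : ℕ∞) u) (hV : ContDiff ℝ (⊤ : ℕ∞) V)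
    (hw : ContDiff ℝ (⊤ : ℕ∞) w) (hW : ContDiff ℝ (⊤ : ℕ∞) W) :
    ∀ x : E4,
      (∑ k : Fin 4, pd k (fun y =>
          pd k (fun z => mvec (A z) (lap u z)) y
          - (2 : ℝ) • mvec (pd k A y) (lap u y)
          + mvec (lap A y) (pd k u y)
          - mvec (A y) (mvec (w y) (pd k u y))
          + mvec (pd k A y) (∑ l : Fin 4, mvec (V y l) (pd l u y))
          - mvec (A y) (pd k (fun z => ∑ l : Fin 4, mvec (V z l) (pd l u z)) y)) x)
      = mvec (A x)
          (bilap u x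
            - lap (fun y => ∑ l : Fin 4, mvec (V y l) (pd l u y)) x
            - ∑ k : Fin 4, pd k (fun y => mvec (w y) (pd k u y)) x
            - ∑ k : Fin 4, mvec (W x k) (pd k u x))
        + ∑ k : Fin 4, mvec
            (pd k (lap A) x + mmul (lap A x) (V x k) - mmul (pd k A x) (w x)
              + mmul (A x) (W x k)) (pd k u x) := by
  intro x
  have hlu : ContDiff ℝ (⊤ : ℕ∞) (lap u) := contDiff_lap hu
  have hlA : ContDiff ℝ (⊤ : ℕ∞) (lap A) := contDiff_lap hA
  have hSc : ContDiff ℝ (⊤ : ℕ∞) (fun z => ∑ l : Fin 4, mvec (V z l) (pd l u z)) :=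
    ContDiff.sum fun l _ => contDiff_mvec (contDiff_pi.mp hV l) (contDiff_pd l hu)
  have key : ∀ k : Fin 4,
      pd k (fun y =>
          pd k (fun z => mvec (A z) (lap u z)) y
          - (2 : ℝ) • mvec (pd k A y) (lap u y)
          + mvec (lap A y) (pd k u y)
          - mvec (A y) (mvec (w y) (pd k u y))
          + mvec (pd k A y) (∑ l : Fin 4, mvec (V y l) (pd l u y))
          - mvec (A y) (pd k (fun z => ∑ l : Fin 4, mvec (V z l) (pd l u z)) y)) x
      = (mvec (pd k (pd k A) x) (lap u x) + mvec (pd k A x) (pd k (lap u) x)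
          + (mvec (pd k A x) (pd k (lap u) x) + mvec (A x) (pd k (pd k (lap u)) x)))
        - (2 : ℝ) • (mvec (pd k (pd k A) x) (lap u x) + mvec (pd k A x) (pd k (lap u) x))
        + (mvec (pd k (lap A) x) (pd k u x) + mvec (lap A x) (pd k (pd k u) x))
        - (mvec (pd k A x) (mvec (w x) (pd k u x))
            + mvec (A x) (pd k (fun y => mvec (w y) (pd k u y)) x))
        + (mvec (pd k (pd k A) x) (∑ l : Fin 4, mvec (V x l) (pd l u x))
            + mvec (pd k A x) (pd k (fun z => ∑ l : Fin 4, mvec (V z l) (pd l u z)) x))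
        - (mvec (pd k A x) (pd k (fun z => ∑ l : Fin 4, mvec (V z l) (pd l u z)) x)
            + mvec (A x) (pd k (pd k (fun z => ∑ l : Fin 4, mvec (V z l) (pd l u z))) x)) := by
    intro k
    have c1 : ContDiff ℝ (⊤ : ℕ∞) (pd k (fun z => mvec (A z) (lap u z))) :=
      contDiff_pd k (contDiff_mvec hA hlu)
    have c2 : ContDiff ℝ (⊤ : ℕ∞) (fun y => mvec (pd k A y) (lap u y)) :=
      contDiff_mvec (contDiff_pd k hA) hlu
    have c2' : ContDiff ℝ (⊤ : ℕ∞) (fun y => (2 : ℝ) • mvec (pd k A y) (lap u y)) :=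
      c2.const_smul (2 : ℝ)
    have c3 : ContDiff ℝ (⊤ : ℕ∞) (fun y => mvec (lap A y) (pd k u y)) :=
      contDiff_mvec hlA (contDiff_pd k hu)
    have c4 : ContDiff ℝ (⊤ : ℕ∞) (fun y => mvec (A y) (mvec (w y) (pd k u y))) :=
      contDiff_mvec hA (contDiff_mvec hw (contDiff_pd k hu))
    have c5 : ContDiff ℝ (⊤ : ℕ∞) (fun y => mvec (pd k A y) (∑ l : Fin 4, mvec (V y l) (pd l u y))) :=
      contDiff_mvec (contDiff_pd k hA) hSc
    have c6 : ContDiff ℝ (⊤ : ℕ∞)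
        (fun y => mvec (A y) (pd k (fun z => ∑ l : Fin 4, mvec (V z l) (pd l u z)) y)) :=
      contDiff_mvec hA (contDiff_pd k hSc)
    have cQ : ContDiff ℝ (⊤ : ℕ∞) (fun y => mvec (A y) (pd k (lap u) y)) :=
      contDiff_mvec hA (contDiff_pd k hlu)
    -- split the derivative of the six-term function
    have H : HasFDerivAt (fun y =>
          pd k (fun z => mvec (A z) (lap u z)) y
          - (2 : ℝ) • mvec (pd k A y) (lap u y)
          + mvec (lap A y) (pd k u y)
          - mvec (A y) (mvec (w y) (pd k u y))
          + mvec (pd k A y) (∑ l : Fin 4, mvec (V y l) (pd l u y))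
          - mvec (A y) (pd k (fun z => ∑ l : Fin 4, mvec (V z l) (pd l u z)) y))
        (fderiv ℝ (pd k (fun z => mvec (A z) (lap u z))) x
          - fderiv ℝ (fun y => (2 : ℝ) • mvec (pd k A y) (lap u y)) x
          + fderiv ℝ (fun y => mvec (lap A y) (pd k u y)) x
          - fderiv ℝ (fun y => mvec (A y) (mvec (w y) (pd k u y))) x
          + fderiv ℝ (fun y => mvec (pd k A y) (∑ l : Fin 4, mvec (V y l) (pd l u y))) x
          - fderiv ℝ (fun y =>
              mvec (A y) (pd k (fun z => ∑ l : Fin 4, mvec (V z l) (pd l u z)) y)) x) x :=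
      ((((((cdiff c1 x).hasFDerivAt.sub (cdiff c2' x).hasFDerivAt).add
          (cdiff c3 x).hasFDerivAt).sub (cdiff c4 x).hasFDerivAt).add
          (cdiff c5 x).hasFDerivAt).sub (cdiff c6 x).hasFDerivAt)
    have e0 : pd k (fun y =>
          pd k (fun z => mvec (A z) (lap u z)) y
          - (2 : ℝ) • mvec (pd k A y) (lap u y)
          + mvec (lap A y) (pd k u y)
          - mvec (A y) (mvec (w y) (pd k u y))
          + mvec (pd k A y) (∑ l : Fin 4, mvec (V y l) (pd l u y))
          - mvec (A y) (pd k (fun z => ∑ l : Fin 4, mvec (V z l) (pd l u z)) y)) x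
        = pd k (pd k (fun z => mvec (A z) (lap u z))) x
          - pd k (fun y => (2 : ℝ) • mvec (pd k A y) (lap u y)) x
          + pd k (fun y => mvec (lap A y) (pd k u y)) x
          - pd k (fun y => mvec (A y) (mvec (w y) (pd k u y))) x
          + pd k (fun y => mvec (pd k A y) (∑ l : Fin 4, mvec (V y l) (pd l u y))) x
          - pd k (fun y =>
              mvec (A y) (pd k (fun z => ∑ l : Fin 4, mvec (V z l) (pd l u z)) y)) x := by
      show fderiv ℝ _ x (EuclideanSpace.single k 1) = _
      rw [H.fderiv]
      simp only [ContinuousLinearMap.sub_apply, ContinuousLinearMap.add_apply]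
      rfl
    have e1 : pd k (pd k (fun z => mvec (A z) (lap u z))) x
        = mvec (pd k (pd k A) x) (lap u x) + mvec (pd k A x) (pd k (lap u) x)
          + (mvec (pd k A x) (pd k (lap u) x) + mvec (A x) (pd k (pd k (lap u)) x)) := by
      have hpdG : pd k (fun z => mvec (A z) (lap u z))
          = fun y => mvec (pd k A y) (lap u y) + mvec (A y) (pd k (lap u) y) :=
        funext fun y => pd_mvec k (cdiff hA y) (cdiff hlu y)
      rw [hpdG, pd_add k (cdiff c2 x) (cdiff cQ x),
        pd_mvec k (cdiff (contDiff_pd k hA) x) (cdiff hlu x),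
        pd_mvec k (cdiff hA x) (cdiff (contDiff_pd k hlu) x)]
    have e2 : pd k (fun y => (2 : ℝ) • mvec (pd k A y) (lap u y)) x
        = (2 : ℝ) • (mvec (pd k (pd k A) x) (lap u x) + mvec (pd k A x) (pd k (lap u) x)) := by
      rw [pd_smul k (2 : ℝ) (cdiff c2 x),
        pd_mvec k (cdiff (contDiff_pd k hA) x) (cdiff hlu x)]
    have e3 : pd k (fun y => mvec (lap A y) (pd k u y)) x
        = mvec (pd k (lap A) x) (pd k u x) + mvec (lap A x) (pd k (pd k u) x) :=
      pd_mvec k (cdiff hlA x) (cdiff (contDiff_pd k hu) x)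
    have e4 : pd k (fun y => mvec (A y) (mvec (w y) (pd k u y))) x
        = mvec (pd k A x) (mvec (w x) (pd k u x))
          + mvec (A x) (pd k (fun y => mvec (w y) (pd k u y)) x) :=
      pd_mvec k (cdiff hA x) (cdiff (contDiff_mvec hw (contDiff_pd k hu)) x)
    have e5 : pd k (fun y => mvec (pd k A y) (∑ l : Fin 4, mvec (V y l) (pd l u y))) x
        = mvec (pd k (pd k A) x) (∑ l : Fin 4, mvec (V x l) (pd l u x))
          + mvec (pd k A x) (pd k (fun z => ∑ l : Fin 4, mvec (V z l) (pd l u z)) x) :=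
      pd_mvec k (cdiff (contDiff_pd k hA) x) (cdiff hSc x)
    have e6 : pd k (fun y =>
          mvec (A y) (pd k (fun z => ∑ l : Fin 4, mvec (V z l) (pd l u z)) y)) x
        = mvec (pd k A x) (pd k (fun z => ∑ l : Fin 4, mvec (V z l) (pd l u z)) x)
          + mvec (A x) (pd k (pd k (fun z => ∑ l : Fin 4, mvec (V z l) (pd l u z))) x) :=
      pd_mvec k (cdiff hA x) (cdiff (contDiff_pd k hSc) x)
    rw [e0, e1, e2, e3, e4, e5, e6]
  simp only [key]
  simp only [smul_add, two_smul, mvec_sub, mvec_add_left, mvec_sub_left, mvec_mmul, mvec_sum,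
    Finset.sum_add_distrib, Finset.sum_sub_distrib]
  have B1 : ∑ k : Fin 4, mvec (A x) (pd k (pd k (lap u)) x) = mvec (A x) (bilap u x) := by
    rw [← mvec_sum]; rfl
  have B2 : ∑ k : Fin 4, mvec (pd k (pd k A) x) (lap u x) = mvec (lap A x) (lap u x) := by
    rw [← mvec_sum_left]; rfl
  have B3 : ∑ k : Fin 4, mvec (lap A x) (pd k (pd k u) x) = mvec (lap A x) (lap u x) := by
    rw [← mvec_sum]; rfl
  have B4 : ∑ k : Fin 4, mvec (A x) (pd k (pd k (fun z => ∑ l : Fin 4, mvec (V z l) (pd l u z))) x)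
      = mvec (A x) (lap (fun z => ∑ l : Fin 4, mvec (V z l) (pd l u z)) x) := by
    rw [← mvec_sum]; rfl
  have B5 : ∑ k : Fin 4, ∑ l : Fin 4, mvec (pd k (pd k A) x) (mvec (V x l) (pd l u x))
      = ∑ k : Fin 4, mvec (lap A x) (mvec (V x k) (pd k u x)) := by
    rw [Finset.sum_comm]
    exact Finset.sum_congr rfl fun l _ => by rw [← mvec_sum_left]; rfl
  rw [B1, B2, B3, B4, B5]
  abel
end
end

section
/- On a bounded domain in ℝ⁴, the product of two functions in the Lorentz space L^{4,2} belongs to L^{2,1}, with ‖fg‖_{L^{2,1}} ≤ C‖f‖_{L^{4,2}}‖g‖_{L^{4,2}}. -/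
open MeasureTheory Metric Set ENNReal NNReal

noncomputable section

/-- The distribution function `μ {|f| > s}`. -/
def distFn {α E : Type*} [MeasurableSpace α] [NormedAddCommGroup E]
    (μ : Measure α) (f : α → E) (s : ℝ≥0∞) : ℝ≥0∞ :=
  μ {x | s < (‖f x‖₊ : ℝ≥0∞)}

/-- The decreasing rearrangement `f*` of `f`. -/
def rearr {α E : Type*} [MeasurableSpace α] [NormedAddCommGroup E]
    (μ : Measure α) (f : α → E) (t : ℝ) : ℝ≥0∞ :=
  sInf {s : ℝ≥0∞ | distFn μ f s ≤ ENNReal.ofReal t}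

/-- The maximal rearrangement `f**(t) = t⁻¹ ∫₀ᵗ f*(s) ds`. -/
def rearrM {α E : Type*} [MeasurableSpace α] [NormedAddCommGroup E]
    (μ : Measure α) (f : α → E) (t : ℝ) : ℝ≥0∞ :=
  ENNReal.ofReal (1 / t) * ∫⁻ s in Set.Ioc (0 : ℝ) t, rearr μ f s

/-- The Lorentz `L^{p,q}` norm `‖f‖_{L^{p,q}} = (∫₀^∞ (t^{1/p} f**(t))^q dt/t)^{1/q}`
(with the obvious supremum modification for `q = ∞`). -/
def lorentzNorm {α E : Type*} [MeasurableSpace α] [NormedAddCommGroup E]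
    (p q : ℝ≥0∞) (μ : Measure α) (f : α → E) : ℝ≥0∞ :=
  if q = ∞ then
    ⨆ t : Set.Ioi (0 : ℝ), ENNReal.ofReal t.1 ^ (1 / p).toReal * rearrM μ f t.1
  else
    (∫⁻ t in Set.Ioi (0 : ℝ),
        (ENNReal.ofReal t ^ (1 / p).toReal * rearrM μ f t) ^ q.toReal
          * ENNReal.ofReal (1 / t)) ^ (1 / q.toReal)

/-- Membership in the Lorentz space `L^{p,q}`. -/
def MemLorentz {α E : Type*} [MeasurableSpace α] [NormedAddCommGroup E]
    (p q : ℝ≥0∞) (μ : Measure α) (f : α → E) : Prop :=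
  lorentzNorm p q μ f < ⊤

variable {α E : Type*} [MeasurableSpace α] [NormedAddCommGroup E] {μ : Measure α} {f g : α → E}

theorem distFn_antitone : Antitone (distFn μ f) := fun a b hab =>
  measure_mono (fun x hx => lt_of_le_of_lt hab hx)

theorem rearr_antitone : Antitone (rearr μ f) := fun a b hab =>
  sInf_le_sInf (fun s hs => hs.trans (ENNReal.ofReal_le_ofReal hab))

theorem distFn_le_of_rearr_lt {t : ℝ} {a : ℝ≥0∞} (h : rearr μ f t < a) :
    distFn μ f a ≤ ENNReal.ofReal t := by
  obtain ⟨b, hb, hba⟩ := sInf_lt_iff.mp h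
  exact (distFn_antitone hba.le).trans hb

theorem measurable_rearr : Measurable (rearr μ f) :=
  (rearr_antitone (μ := μ) (f := f)).measurable

theorem measurable_rearrM : Measurable (rearrM μ f) := by
  apply Measurable.mul
  · exact ENNReal.measurable_ofReal.comp (measurable_const.div measurable_id)
  · exact Monotone.measurable
      (fun a b hab => lintegral_mono_set (Set.Ioc_subset_Ioc_right hab))

theorem rearr_le_rearrM {t : ℝ} (ht : 0 < t) : rearr μ f t ≤ rearrM μ f t := by
  have h1 : ENNReal.ofReal t * rearr μ f t ≤ ∫⁻ s in Set.Ioc (0 : ℝ) t, rearr μ f s := by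
    calc ENNReal.ofReal t * rearr μ f t
        = ∫⁻ _ in Set.Ioc (0 : ℝ) t, rearr μ f t := by
          rw [setLIntegral_const, Real.volume_Ioc, sub_zero, mul_comm]
      _ ≤ ∫⁻ s in Set.Ioc (0 : ℝ) t, rearr μ f s :=
          setLIntegral_mono measurable_rearr (fun s hs => rearr_antitone hs.2)
  calc rearr μ f t = ENNReal.ofReal (1 / t) * (ENNReal.ofReal t * rearr μ f t) := by
        rw [← mul_assoc, ← ENNReal.ofReal_mul (by positivity), one_div,
          inv_mul_cancel₀ ht.ne', ENNReal.ofReal_one, one_mul]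
    _ ≤ rearrM μ f t := mul_le_mul_right h1 _

theorem rearrM_half_le {t : ℝ} (ht : 0 < t) : rearrM μ f (t / 2) ≤ 2 * rearrM μ f t := by
  rw [rearrM, rearrM, ← mul_assoc]
  refine mul_le_mul' ?_ (lintegral_mono_set (Set.Ioc_subset_Ioc_right (by linarith)))
  rw [show (1 : ℝ) / (t / 2) = 2 * (1 / t) by field_simp]
  rw [ENNReal.ofReal_mul (by norm_num), ENNReal.ofReal_ofNat]

open Filter Topology

/-- pick arbitrarily small witnesses from an a.e. property on `Ioc 0 t₀`. -/
theorem exists_small_of_ae {P : ℝ → Prop} {t₀ : ℝ} (ht₀ : 0 < t₀)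
    (h : ∀ᵐ s ∂(volume.restrict (Set.Ioc (0:ℝ) t₀)), P s) :
    ∀ u : ℝ, 0 < u → ∃ v, 0 < v ∧ v ≤ u ∧ P v := by
  intro u hu
  by_contra hcon
  push_neg at hcon
  have hsub : Set.Ioc (0:ℝ) (min u t₀) ⊆ {s | ¬ P s} := by
    intro v hv
    exact fun hPv => (hcon v hv.1 (hv.2.trans (min_le_left _ _))) hPv
  have h0 : volume.restrict (Set.Ioc (0:ℝ) t₀) {s | ¬ P s} = 0 := h
  have h1 : volume.restrict (Set.Ioc (0:ℝ) t₀) (Set.Ioc (0:ℝ) (min u t₀)) = 0 :=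
    le_antisymm (h0 ▸ measure_mono hsub) zero_le
  rw [Measure.restrict_apply measurableSet_Ioc,
    Set.inter_eq_self_of_subset_left (Set.Ioc_subset_Ioc_right (min_le_right _ _)),
    Real.volume_Ioc] at h1
  have : (0:ℝ) < min u t₀ := lt_min hu ht₀
  rw [sub_zero, ENNReal.ofReal_eq_zero] at h1
  exact absurd h1 (not_le.mpr this)

theorem exists_pos_of_ae {P : ℝ → Prop}
    (h : ∀ᵐ s ∂(volume.restrict (Set.Ioi (0:ℝ))), P s) :
    ∃ v : ℝ, 0 < v ∧ P v := by
  by_contra hcon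
  push_neg at hcon
  have hsub : Set.Ioi (0:ℝ) ⊆ {s | ¬ P s} := fun v hv hPv => (hcon v hv) hPv
  have h0 : volume.restrict (Set.Ioi (0:ℝ)) {s | ¬ P s} = 0 := h
  have h1 : volume.restrict (Set.Ioi (0:ℝ)) (Set.Ioi (0:ℝ)) = 0 :=
    le_antisymm (h0 ▸ measure_mono hsub) zero_le
  rw [Measure.restrict_apply_self, Real.volume_Ioi] at h1
  exact ENNReal.top_ne_zero h1

section Lemmas
variable {α E : Type*} [MeasurableSpace α] [NormedAddCommGroup E] {μ : Measure α} {f : α → E}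

theorem measurable_W (p : ℝ≥0∞) (q : ℝ≥0∞) :
    Measurable (fun t : ℝ =>
      (ENNReal.ofReal t ^ (1 / p).toReal * rearrM μ f t) ^ q.toReal
        * ENNReal.ofReal (1 / t)) := by
  apply Measurable.mul
  · exact ((ENNReal.measurable_ofReal.pow_const _).mul measurable_rearrM).pow_const _
  · exact ENNReal.measurable_ofReal.comp (measurable_const.div measurable_id)

theorem rearr_ne_top (hf : lorentzNorm 4 2 μ f ≠ ⊤) {u : ℝ} (hu : 0 < u) :
    rearr μ f u ≠ ⊤ := by
  rw [lorentzNorm, if_neg (by norm_num : (2:ℝ≥0∞) ≠ ∞)] at hf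
  set W : ℝ → ℝ≥0∞ := fun t =>
    (ENNReal.ofReal t ^ (1 / (4:ℝ≥0∞)).toReal * rearrM μ f t) ^ (2:ℝ≥0∞).toReal
      * ENNReal.ofReal (1 / t) with hWdef
  have hq : (0:ℝ) < 1 / (2:ℝ≥0∞).toReal := by
    rw [ENNReal.toReal_ofNat]; norm_num
  have hint : (∫⁻ t in Set.Ioi (0:ℝ), W t) ≠ ⊤ := by
    intro h
    rw [h, ENNReal.top_rpow_of_pos hq] at hf
    exact hf rfl
  have hae : ∀ᵐ t ∂(volume.restrict (Set.Ioi (0:ℝ))), W t < ⊤ :=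
    ae_lt_top (measurable_W 4 2) hint
  obtain ⟨t₀, ht₀, hWt₀⟩ := exists_pos_of_ae (P := fun t => W t < ⊤) hae
  -- extract rearrM μ f t₀ ≠ ⊤
  have ha : ENNReal.ofReal t₀ ^ (1 / (4:ℝ≥0∞)).toReal ≠ 0 := by
    simp [ENNReal.rpow_eq_zero_iff, ENNReal.ofReal_eq_zero, not_or, ht₀,
      ENNReal.ofReal_ne_top, le_of_lt ht₀]
  have hc : ENNReal.ofReal (1 / t₀) ≠ 0 := by
    simp [ENNReal.ofReal_eq_zero, not_le]
    positivity
  have hM : rearrM μ f t₀ ≠ ⊤ := by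
    intro hM
    rw [hWdef] at hWt₀
    simp only [hM] at hWt₀
    rw [ENNReal.mul_top ha, ENNReal.top_rpow_of_pos (by norm_num), ENNReal.top_mul hc] at hWt₀
    exact (lt_irrefl _ hWt₀).elim
  have hI : (∫⁻ s in Set.Ioc (0:ℝ) t₀, rearr μ f s) ≠ ⊤ := by
    intro hI
    rw [rearrM, hI, ENNReal.mul_top hc] at hM
    exact hM rfl
  have hae2 : ∀ᵐ s ∂(volume.restrict (Set.Ioc (0:ℝ) t₀)), rearr μ f s < ⊤ :=
    ae_lt_top measurable_rearr hI
  obtain ⟨v, hv0, hvu, hv⟩ := exists_small_of_ae ht₀ hae2 u hu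
  exact fun h => hv.ne (top_le_iff.mp (h ▸ rearr_antitone hvu))
end Lemmas

section Lemmas2
variable {α E : Type*} [MeasurableSpace α] [NormedAddCommGroup E] {μ : Measure α} {f : α → E}

theorem null_of_lorentz_zero (hf : lorentzNorm 4 2 μ f = 0) : μ {x | f x ≠ 0} = 0 := by
  rw [lorentzNorm, if_neg (by norm_num : (2:ℝ≥0∞) ≠ ∞)] at hf
  set W : ℝ → ℝ≥0∞ := fun t =>
    (ENNReal.ofReal t ^ (1 / (4:ℝ≥0∞)).toReal * rearrM μ f t) ^ (2:ℝ≥0∞).toReal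
      * ENNReal.ofReal (1 / t) with hWdef
  have hq : (0:ℝ) < 1 / (2:ℝ≥0∞).toReal := by
    rw [ENNReal.toReal_ofNat]; norm_num
  have hint : (∫⁻ t in Set.Ioi (0:ℝ), W t) = 0 := by
    rcases (ENNReal.rpow_eq_zero_iff.mp hf) with ⟨h, _⟩ | ⟨_, h⟩
    · exact h
    · exact absurd h (not_lt.mpr hq.le)
  have hae : ∀ᵐ t ∂(volume.restrict (Set.Ioi (0:ℝ))), W t = 0 :=
    (lintegral_eq_zero_iff (measurable_W 4 2)).mp hint
  obtain ⟨t₀, ht₀, hWt₀⟩ := exists_pos_of_ae (P := fun t => W t = 0) hae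
  have ha : ENNReal.ofReal t₀ ^ (1 / (4:ℝ≥0∞)).toReal ≠ 0 := by
    simp [ENNReal.rpow_eq_zero_iff, ENNReal.ofReal_eq_zero, not_or, ht₀,
      ENNReal.ofReal_ne_top, le_of_lt ht₀]
  have hc : ENNReal.ofReal (1 / t₀) ≠ 0 := by
    simp only [ne_eq, ENNReal.ofReal_eq_zero, not_le]
    positivity
  have hM : rearrM μ f t₀ = 0 := by
    rw [hWdef] at hWt₀
    simp only [mul_eq_zero] at hWt₀
    rcases hWt₀ with h | h
    · rcases ENNReal.rpow_eq_zero_iff.mp h with ⟨h2, _⟩ | ⟨_, h2⟩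
      · rcases mul_eq_zero.mp h2 with h3 | h3
        · exact absurd h3 ha
        · exact h3
      · exact absurd h2 (by norm_num)
    · exact absurd h hc
  have hI : (∫⁻ s in Set.Ioc (0:ℝ) t₀, rearr μ f s) = 0 := by
    rcases mul_eq_zero.mp hM with h | h
    · exact absurd h hc
    · exact h
  have hae2 : ∀ᵐ s ∂(volume.restrict (Set.Ioc (0:ℝ) t₀)), rearr μ f s = 0 :=
    (lintegral_eq_zero_iff measurable_rearr).mp hI
  have hdist : ∀ b : ℝ≥0∞, 0 < b → distFn μ f b = 0 := by
    intro b hb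
    have hle : ∀ u : ℝ, 0 < u → distFn μ f b ≤ ENNReal.ofReal u := by
      intro u hu
      obtain ⟨v, hv0, hvu, hv⟩ := exists_small_of_ae ht₀ hae2 u hu
      exact (distFn_le_of_rearr_lt (hv ▸ hb)).trans (ENNReal.ofReal_le_ofReal hvu)
    have : distFn μ f b ≤ 0 := by
      refine ENNReal.le_of_forall_pos_le_add (fun ε hε _ => ?_)
      rw [zero_add]
      calc distFn μ f b ≤ ENNReal.ofReal (ε : ℝ) := hle _ hε
        _ = (ε : ℝ≥0∞) := ENNReal.ofReal_coe_nnreal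
    exact le_antisymm this zero_le
  have hsub : {x | f x ≠ 0} ⊆ ⋃ n : ℕ, {x | ((n:ℝ≥0∞))⁻¹ < (‖f x‖₊ : ℝ≥0∞)} := by
    intro x hx
    have : (0:ℝ≥0∞) < (‖f x‖₊ : ℝ≥0∞) := by
      simpa [pos_iff_ne_zero] using hx
    obtain ⟨n, hn⟩ := ENNReal.exists_inv_nat_lt this.ne'
    exact Set.mem_iUnion.mpr ⟨n, hn⟩
  refine measure_mono_null hsub (measure_iUnion_null (fun n => ?_))
  rcases Nat.eq_zero_or_pos n with h | h
  · subst h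
    simp only [Nat.cast_zero, ENNReal.inv_zero]
    have : {x | (⊤:ℝ≥0∞) < (‖f x‖₊ : ℝ≥0∞)} = (∅ : Set α) := by
      ext x; simp
    rw [this]
    exact measure_empty
  · exact hdist _ (by simp [ENNReal.inv_pos])

theorem lorentz21_zero_of_null {h : α → E} (hnull : μ {x | h x ≠ 0} = 0) :
    lorentzNorm 2 1 μ h = 0 := by
  have hdist : ∀ b : ℝ≥0∞, distFn μ h b = 0 := by
    intro b
    refine measure_mono_null (fun x hx => ?_) hnull
    simp only [Set.mem_setOf_eq] at hx ⊢
    intro h0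
    rw [h0] at hx
    simp at hx
  have hre : ∀ t : ℝ, rearr μ h t = 0 := by
    intro t
    have : (0:ℝ≥0∞) ∈ {s : ℝ≥0∞ | distFn μ h s ≤ ENNReal.ofReal t} := by
      simp [hdist]
    exact le_antisymm (sInf_le this) zero_le
  have hreM : ∀ t : ℝ, rearrM μ h t = 0 := by
    intro t
    rw [rearrM]
    have : ∀ s ∈ Set.Ioc (0:ℝ) t, rearr μ h s = 0 := fun s _ => hre s
    rw [setLIntegral_congr_fun measurableSet_Ioc this]
    simp
  rw [lorentzNorm, if_neg (by norm_num : (1:ℝ≥0∞) ≠ ∞)]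
  have : ∀ t ∈ Set.Ioi (0:ℝ),
      (ENNReal.ofReal t ^ (1 / (2:ℝ≥0∞)).toReal * rearrM μ h t) ^ (1:ℝ≥0∞).toReal
        * ENNReal.ofReal (1 / t) = 0 := by
    intro t _
    rw [hreM t, mul_zero, ENNReal.toReal_one, ENNReal.rpow_one, zero_mul]
  rw [setLIntegral_congr_fun measurableSet_Ioi this]
  simp only [lintegral_zero]
  rw [ENNReal.zero_rpow_of_pos (by rw [ENNReal.toReal_one]; norm_num)]
end Lemmas2

section MulLe
variable {α : Type*} [MeasurableSpace α] {μ : Measure α}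
open Filter Topology
theorem rearr_mul_le {f g : α → ℝ} {s : ℝ} (hs : 0 < s)
    (hf : rearr μ f (s / 2) ≠ ⊤) (hg : rearr μ g (s / 2) ≠ ⊤) :
    rearr μ (f * g) s ≤ rearr μ f (s / 2) * rearr μ g (s / 2) := by
  set A := rearr μ f (s / 2) with hA
  set B := rearr μ g (s / 2) with hB
  have key : ∀ a b : ℝ≥0∞, A < a → B < b → rearr μ (f * g) s ≤ a * b := by
    intro a b ha hb
    apply sInf_le
    show distFn μ (f * g) (a * b) ≤ ENNReal.ofReal s
    have hsub : {x | a * b < (‖(f * g) x‖₊ : ℝ≥0∞)}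
        ⊆ {x | a < (‖f x‖₊ : ℝ≥0∞)} ∪ {x | b < (‖g x‖₊ : ℝ≥0∞)} := by
      intro x hx
      by_contra h
      simp only [Set.mem_union, Set.mem_setOf_eq, not_or, not_lt] at h
      obtain ⟨h1, h2⟩ := h
      simp only [Set.mem_setOf_eq] at hx
      have : (‖(f * g) x‖₊ : ℝ≥0∞) ≤ a * b := by
        simp only [Pi.mul_apply, nnnorm_mul, ENNReal.coe_mul]
        exact mul_le_mul' h1 h2
      exact absurd hx (not_lt.mpr this)
    calc distFn μ (f * g) (a * b) ≤ μ ({x | a < (‖f x‖₊ : ℝ≥0∞)} ∪ {x | b < (‖g x‖₊ : ℝ≥0∞)}) :=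
          measure_mono hsub
      _ ≤ distFn μ f a + distFn μ g b := measure_union_le _ _
      _ ≤ ENNReal.ofReal (s / 2) + ENNReal.ofReal (s / 2) :=
          add_le_add (distFn_le_of_rearr_lt ha) (distFn_le_of_rearr_lt hb)
      _ = ENNReal.ofReal s := by
          rw [← ENNReal.ofReal_add (by linarith) (by linarith)]
          norm_num
  have hten : Tendsto (fun ε : ℝ≥0∞ => (A + ε) * (B + ε)) (𝓝[>] 0) (𝓝 (A * B)) := by
    have h0 : Tendsto (fun ε : ℝ≥0∞ => ε) (𝓝[>] (0:ℝ≥0∞)) (𝓝 0) :=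
      tendsto_id.mono_left nhdsWithin_le_nhds
    have h1 : Tendsto (fun ε : ℝ≥0∞ => A + ε) (𝓝[>] 0) (𝓝 A) := by
      simpa using Filter.Tendsto.add (tendsto_const_nhds : Tendsto _ _ (𝓝 A)) h0
    have h2 : Tendsto (fun ε : ℝ≥0∞ => B + ε) (𝓝[>] 0) (𝓝 B) := by
      simpa using Filter.Tendsto.add (tendsto_const_nhds : Tendsto _ _ (𝓝 B)) h0
    exact ENNReal.Tendsto.mul h1 (Or.inr hg) h2 (Or.inr hf)
  refine ge_of_tendsto hten ?_
  filter_upwards [self_mem_nhdsWithin] with ε hε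
  exact key _ _ (ENNReal.lt_add_right hf (ne_of_gt hε)) (ENNReal.lt_add_right hg (ne_of_gt hε))

end MulLe

section Main
variable {α : Type*} [MeasurableSpace α] {μ : Measure α}

theorem rearr_mul_le4 {f g : α → ℝ} (hf : ∀ u : ℝ, 0 < u → rearr μ f u ≠ ⊤)
    (hg : ∀ u : ℝ, 0 < u → rearr μ g u ≠ ⊤) {s : ℝ} (hs : 0 < s) :
    rearr μ (f * g) s ≤ 4 * (rearrM μ f s * rearrM μ g s) := by
  calc rearr μ (f * g) s ≤ rearr μ f (s / 2) * rearr μ g (s / 2) :=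
        rearr_mul_le hs (hf _ (by linarith)) (hg _ (by linarith))
    _ ≤ rearrM μ f (s / 2) * rearrM μ g (s / 2) :=
        mul_le_mul' (rearr_le_rearrM (by linarith)) (rearr_le_rearrM (by linarith))
    _ ≤ (2 * rearrM μ f s) * (2 * rearrM μ g s) :=
        mul_le_mul' (rearrM_half_le hs) (rearrM_half_le hs)
    _ = 4 * (rearrM μ f s * rearrM μ g s) := by ring

theorem rearrM_mul_le4 {f g : α → ℝ} (hf : ∀ u : ℝ, 0 < u → rearr μ f u ≠ ⊤)
    (hg : ∀ u : ℝ, 0 < u → rearr μ g u ≠ ⊤) {t : ℝ} (ht : 0 < t) :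
    rearrM μ (f * g) t
      ≤ ENNReal.ofReal (1 / t) * (4 * ∫⁻ s in Set.Ioc (0:ℝ) t, rearrM μ f s * rearrM μ g s) := by
  rw [rearrM, ← lintegral_const_mul 4 (f := fun s => rearrM μ f s * rearrM μ g s)
    (measurable_rearrM.mul measurable_rearrM)]
  exact mul_le_mul_right
    (setLIntegral_mono (measurable_const.mul (measurable_rearrM.mul measurable_rearrM))
      (fun s hs => rearr_mul_le4 hf hg hs.1)) _
end Main

section Tonelli

theorem lintegral_Ici_rpow {s : ℝ} (hs : 0 < s) :
    ∫⁻ t in Set.Ici s, ENNReal.ofReal (t ^ (-3/2 : ℝ))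
      = ENNReal.ofReal (2 * s ^ (-1/2 : ℝ)) := by
  rw [← Measure.restrict_congr_set Ioi_ae_eq_Ici]
  rw [← ofReal_integral_eq_lintegral_ofReal (integrableOn_Ioi_rpow_of_lt (by norm_num) hs)]
  · congr 1
    rw [integral_Ioi_rpow_of_lt (by norm_num) hs]
    have h1 : (-3/2 + 1 : ℝ) = -1/2 := by norm_num
    rw [h1]
    field_simp
  · filter_upwards [ae_restrict_mem measurableSet_Ioi] with t ht
    exact Real.rpow_nonneg (le_of_lt (hs.trans ht)) _

theorem tonelli_step (H : ℝ → ℝ≥0∞) (hH : Measurable H) :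
    (∫⁻ t in Set.Ioi (0:ℝ), ENNReal.ofReal (t ^ (-3/2 : ℝ)) * ∫⁻ s in Set.Ioc (0:ℝ) t, H s)
      = ∫⁻ s in Set.Ioi (0:ℝ), H s * ENNReal.ofReal (2 * s ^ (-1/2 : ℝ)) := by
  set F : ℝ → ℝ → ℝ≥0∞ := fun t s =>
    ENNReal.ofReal (t ^ (-3/2:ℝ))
      * ({p : ℝ × ℝ | p.2 ≤ p.1}.indicator (fun _ => (1:ℝ≥0∞)) (t, s)) * H s with hFdef
  have hFm : Measurable (Function.uncurry F) := by
    apply Measurable.mul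
    · apply Measurable.mul
      · exact ENNReal.measurable_ofReal.comp (measurable_fst.pow measurable_const)
      · exact (measurable_const.indicator (measurableSet_le measurable_snd measurable_fst))
    · exact hH.comp measurable_snd
  have stepA : ∀ t : ℝ,
      (∫⁻ s in Set.Ioi (0:ℝ), F t s)
        = ENNReal.ofReal (t ^ (-3/2:ℝ)) * ∫⁻ s in Set.Ioc (0:ℝ) t, H s := by
    intro t
    have e1 : ∀ s : ℝ, F t s
        = ENNReal.ofReal (t ^ (-3/2:ℝ)) * (Set.Iic t).indicator H s := by
      intro s
      rw [hFdef]
      simp only [Set.indicator_apply, Set.mem_setOf_eq, Set.mem_Iic]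
      by_cases h : s ≤ t <;> simp [h]
    calc (∫⁻ s in Set.Ioi (0:ℝ), F t s)
        = ∫⁻ s in Set.Ioi (0:ℝ), ENNReal.ofReal (t ^ (-3/2:ℝ)) * (Set.Iic t).indicator H s :=
          lintegral_congr (fun s => e1 s)
      _ = ENNReal.ofReal (t ^ (-3/2:ℝ)) * ∫⁻ s in Set.Ioi (0:ℝ), (Set.Iic t).indicator H s :=
          lintegral_const_mul _ (hH.indicator measurableSet_Iic)
      _ = ENNReal.ofReal (t ^ (-3/2:ℝ)) * ∫⁻ s in Set.Ioc (0:ℝ) t, H s := by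
          rw [lintegral_indicator measurableSet_Iic, Measure.restrict_restrict measurableSet_Iic,
            Set.inter_comm, Set.Ioi_inter_Iic]
  have stepC : ∀ s ∈ Set.Ioi (0:ℝ),
      (∫⁻ t in Set.Ioi (0:ℝ), F t s) = H s * ENNReal.ofReal (2 * s ^ (-1/2 : ℝ)) := by
    intro s hs
    have hs' : (0:ℝ) < s := hs
    have e2 : ∀ t : ℝ, F t s
        = (Set.Ici s).indicator (fun u => ENNReal.ofReal (u ^ (-3/2:ℝ))) t * H s := by
      intro t
      rw [hFdef]
      simp only [Set.indicator_apply, Set.mem_setOf_eq, Set.mem_Ici]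
      by_cases h : s ≤ t <;> simp [h]
    calc (∫⁻ t in Set.Ioi (0:ℝ), F t s)
        = ∫⁻ t in Set.Ioi (0:ℝ),
            (Set.Ici s).indicator (fun u => ENNReal.ofReal (u ^ (-3/2:ℝ))) t * H s :=
          lintegral_congr (fun t => e2 t)
      _ = (∫⁻ t in Set.Ioi (0:ℝ),
            (Set.Ici s).indicator (fun u => ENNReal.ofReal (u ^ (-3/2:ℝ))) t) * H s :=
          lintegral_mul_const _
            ((ENNReal.measurable_ofReal.comp (measurable_id.pow measurable_const)).indicator
              measurableSet_Ici)
      _ = (∫⁻ t in Set.Ici s, ENNReal.ofReal (t ^ (-3/2:ℝ))) * H s := by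
          have hset : Set.Ici s ∩ Set.Ioi (0:ℝ) = Set.Ici s :=
            Set.inter_eq_left.mpr (fun x hx => lt_of_lt_of_le hs' hx)
          rw [lintegral_indicator measurableSet_Ici, Measure.restrict_restrict measurableSet_Ici,
            hset]
      _ = H s * ENNReal.ofReal (2 * s ^ (-1/2 : ℝ)) := by
          rw [lintegral_Ici_rpow hs', mul_comm]
  calc (∫⁻ t in Set.Ioi (0:ℝ), ENNReal.ofReal (t ^ (-3/2 : ℝ)) * ∫⁻ s in Set.Ioc (0:ℝ) t, H s)
      = ∫⁻ t in Set.Ioi (0:ℝ), ∫⁻ s in Set.Ioi (0:ℝ), F t s :=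
        lintegral_congr (fun t => (stepA t).symm)
    _ = ∫⁻ s in Set.Ioi (0:ℝ), ∫⁻ t in Set.Ioi (0:ℝ), F t s :=
        lintegral_lintegral_swap hFm.aemeasurable
    _ = ∫⁻ s in Set.Ioi (0:ℝ), H s * ENNReal.ofReal (2 * s ^ (-1/2 : ℝ)) :=
        setLIntegral_congr_fun measurableSet_Ioi stepC
end Tonelli

section MainEst
variable {α : Type*} [MeasurableSpace α] {μ : Measure α}

theorem weight_eq {t : ℝ} (ht : 0 < t) :
    ENNReal.ofReal t ^ (1 / (2:ℝ≥0∞)).toReal * ENNReal.ofReal (1 / t) * ENNReal.ofReal (1 / t)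
      = ENNReal.ofReal (t ^ (-3/2 : ℝ)) := by
  have he2 : (1 / (2:ℝ≥0∞)).toReal = (1/2 : ℝ) := by
    rw [ENNReal.toReal_div]; norm_num
  rw [he2, ENNReal.ofReal_rpow_of_pos ht, ← ENNReal.ofReal_mul (by positivity),
    ← ENNReal.ofReal_mul (by positivity)]
  congr 1
  rw [show (1:ℝ)/t = t ^ (-1:ℝ) by rw [Real.rpow_neg_one, one_div],
    ← Real.rpow_add ht, ← Real.rpow_add ht]
  norm_num

theorem phi_sq_eq {t : ℝ} (ht : 0 < t) (x : ℝ≥0∞) :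
    (ENNReal.ofReal t ^ (1 / (4:ℝ≥0∞)).toReal * x) ^ (2:ℝ≥0∞).toReal * ENNReal.ofReal (1 / t)
      = (ENNReal.ofReal (t ^ (-1/4 : ℝ)) * x) ^ (2:ℝ) := by
  have he4 : (1 / (4:ℝ≥0∞)).toReal = (1/4 : ℝ) := by
    rw [ENNReal.toReal_div]; norm_num
  rw [he4, ENNReal.toReal_ofNat, ENNReal.mul_rpow_of_nonneg _ _ (by norm_num : (0:ℝ) ≤ 2),
    ENNReal.mul_rpow_of_nonneg _ _ (by norm_num : (0:ℝ) ≤ 2),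
    ← ENNReal.rpow_mul, ENNReal.ofReal_rpow_of_pos ht,
    ENNReal.ofReal_rpow_of_pos (Real.rpow_pos_of_pos ht _),
    ← Real.rpow_mul ht.le, show (1:ℝ)/t = t ^ (-1:ℝ) by rw [Real.rpow_neg_one, one_div],
    mul_right_comm, ← ENNReal.ofReal_mul (by positivity), ← Real.rpow_add ht]
  norm_num

end MainEst

section Assemble
variable {α : Type*} [MeasurableSpace α] {μ : Measure α}

theorem lorentz42_eq (f : α → ℝ) :
    lorentzNorm 4 2 μ f
      = (∫⁻ s in Set.Ioi (0:ℝ),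
          (ENNReal.ofReal (s ^ (-1/4 : ℝ)) * rearrM μ f s) ^ (2:ℝ)) ^ ((1:ℝ)/2) := by
  rw [lorentzNorm, if_neg (by norm_num : (2:ℝ≥0∞) ≠ ∞)]
  rw [setLIntegral_congr_fun measurableSet_Ioi
    (fun ⦃t⦄ (ht : 0 < t) => phi_sq_eq ht (rearrM μ f t))]
  congr 1

theorem main_est {f g : α → ℝ} (hf : ∀ u : ℝ, 0 < u → rearr μ f u ≠ ⊤)
    (hg : ∀ u : ℝ, 0 < u → rearr μ g u ≠ ⊤) :
    lorentzNorm 2 1 μ (f * g)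
      ≤ 8 * lorentzNorm 4 2 μ f * lorentzNorm 4 2 μ g := by
  set H : ℝ → ℝ≥0∞ := fun s => rearrM μ f s * rearrM μ g s with hHdef
  have hHm : Measurable H := measurable_rearrM.mul measurable_rearrM
  set φ : ℝ → ℝ≥0∞ := fun s => ENNReal.ofReal (s ^ (-1/4 : ℝ)) * rearrM μ f s with hφdef
  set ψ : ℝ → ℝ≥0∞ := fun s => ENNReal.ofReal (s ^ (-1/4 : ℝ)) * rearrM μ g s with hψdef
  have hφm : Measurable φ :=
    (ENNReal.measurable_ofReal.comp (measurable_id.pow measurable_const)).mul measurable_rearrM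
  have hψm : Measurable ψ :=
    (ENNReal.measurable_ofReal.comp (measurable_id.pow measurable_const)).mul measurable_rearrM
  have hL : lorentzNorm 2 1 μ (f * g)
      = ∫⁻ t in Set.Ioi (0:ℝ),
          (ENNReal.ofReal t ^ (1 / (2:ℝ≥0∞)).toReal * rearrM μ (f * g) t)
            * ENNReal.ofReal (1 / t) := by
    rw [lorentzNorm, if_neg (by norm_num : (1:ℝ≥0∞) ≠ ∞)]
    simp only [ENNReal.toReal_one, ENNReal.rpow_one, one_div_one]
  rw [hL]
  have step1 : (∫⁻ t in Set.Ioi (0:ℝ),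
        (ENNReal.ofReal t ^ (1 / (2:ℝ≥0∞)).toReal * rearrM μ (f * g) t)
          * ENNReal.ofReal (1 / t))
      ≤ ∫⁻ t in Set.Ioi (0:ℝ),
          4 * (ENNReal.ofReal (t ^ (-3/2:ℝ)) * ∫⁻ s in Set.Ioc (0:ℝ) t, H s) := by
    refine setLIntegral_mono ?_ ?_
    · apply Measurable.const_mul
      apply Measurable.mul
      · exact ENNReal.measurable_ofReal.comp (measurable_id.pow measurable_const)
      · exact Monotone.measurable
          (fun a b hab => lintegral_mono_set (Set.Ioc_subset_Ioc_right hab))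
    · intro t ht
      have ht' : (0:ℝ) < t := ht
      calc (ENNReal.ofReal t ^ (1 / (2:ℝ≥0∞)).toReal * rearrM μ (f * g) t)
            * ENNReal.ofReal (1 / t)
          ≤ (ENNReal.ofReal t ^ (1 / (2:ℝ≥0∞)).toReal
              * (ENNReal.ofReal (1 / t) * (4 * ∫⁻ s in Set.Ioc (0:ℝ) t, H s)))
              * ENNReal.ofReal (1 / t) :=
            mul_le_mul_left (mul_le_mul_right (rearrM_mul_le4 hf hg ht') _) _
        _ = 4 * ((ENNReal.ofReal t ^ (1 / (2:ℝ≥0∞)).toReal * ENNReal.ofReal (1 / t)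
              * ENNReal.ofReal (1 / t)) * ∫⁻ s in Set.Ioc (0:ℝ) t, H s) := by ring
        _ = 4 * (ENNReal.ofReal (t ^ (-3/2:ℝ)) * ∫⁻ s in Set.Ioc (0:ℝ) t, H s) := by
            rw [weight_eq ht']
  refine step1.trans ?_
  rw [lintegral_const_mul 4 (by
    apply Measurable.mul
    · exact ENNReal.measurable_ofReal.comp (measurable_id.pow measurable_const)
    · exact Monotone.measurable
        (fun a b hab => lintegral_mono_set (Set.Ioc_subset_Ioc_right hab)))]
  rw [tonelli_step H hHm]
  have step2 : (∫⁻ s in Set.Ioi (0:ℝ), H s * ENNReal.ofReal (2 * s ^ (-1/2 : ℝ)))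
      = 2 * ∫⁻ s in Set.Ioi (0:ℝ), φ s * ψ s := by
    rw [← lintegral_const_mul 2 (f := fun s => φ s * ψ s) (hφm.mul hψm)]
    refine setLIntegral_congr_fun measurableSet_Ioi (fun ⦃s⦄ (hs : 0 < s) => ?_)
    rw [hHdef, hφdef, hψdef]
    simp only
    rw [ENNReal.ofReal_mul (by norm_num), ENNReal.ofReal_ofNat,
      show (-1/2:ℝ) = -1/4 + -1/4 by norm_num, Real.rpow_add hs,
      ENNReal.ofReal_mul (by positivity)]
    ring
  rw [step2, ← mul_assoc, show (4:ℝ≥0∞) * 2 = 8 by norm_num]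
  have holder : (∫⁻ s in Set.Ioi (0:ℝ), φ s * ψ s)
      ≤ (∫⁻ s in Set.Ioi (0:ℝ), φ s ^ (2:ℝ)) ^ ((1:ℝ)/2)
        * (∫⁻ s in Set.Ioi (0:ℝ), ψ s ^ (2:ℝ)) ^ ((1:ℝ)/2) :=
    ENNReal.lintegral_mul_le_Lp_mul_Lq _ ⟨by norm_num, by norm_num, by norm_num⟩
      hφm.aemeasurable hψm.aemeasurable
  calc 8 * ∫⁻ s in Set.Ioi (0:ℝ), φ s * ψ s
      ≤ 8 * ((∫⁻ s in Set.Ioi (0:ℝ), φ s ^ (2:ℝ)) ^ ((1:ℝ)/2)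
          * (∫⁻ s in Set.Ioi (0:ℝ), ψ s ^ (2:ℝ)) ^ ((1:ℝ)/2)) := mul_le_mul_right holder _
    _ = 8 * lorentzNorm 4 2 μ f * lorentzNorm 4 2 μ g := by
        rw [lorentz42_eq f, lorentz42_eq g, mul_assoc]
end Assemble

/-- On a bounded domain in `ℝ⁴`, the product of two functions in the
Lorentz space `L^{4,2}` belongs to `L^{2,1}`, with
`‖fg‖_{L^{2,1}} ≤ C ‖f‖_{L^{4,2}} ‖g‖_{L^{4,2}}`. -/
theorem stmt7 :
    ∃ C : ℝ≥0, 0 < C ∧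
      ∀ Ω : Set E4, Bornology.IsBounded Ω →
        ∀ f g : E4 → ℝ,
          lorentzNorm 2 1 (volume.restrict Ω) (f * g)
            ≤ C * lorentzNorm 4 2 (volume.restrict Ω) f
              * lorentzNorm 4 2 (volume.restrict Ω) g := by
  refine ⟨8, by norm_num, fun Ω _ f g => ?_⟩
  have hcast : ((8:ℝ≥0) : ℝ≥0∞) = (8:ℝ≥0∞) := by norm_num
  by_cases hF0 : lorentzNorm 4 2 (volume.restrict Ω) f = 0
  · have hnull := null_of_lorentz_zero hF0
    have h2 : (volume.restrict Ω) {x | (f * g) x ≠ 0} = 0 := by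
      refine measure_mono_null ?_ hnull
      intro x hx
      simp only [Set.mem_setOf_eq] at hx ⊢
      intro hx0
      exact hx (by rw [Pi.mul_apply, hx0, zero_mul])
    rw [lorentz21_zero_of_null h2]
    exact zero_le
  by_cases hG0 : lorentzNorm 4 2 (volume.restrict Ω) g = 0
  · have hnull := null_of_lorentz_zero hG0
    have h2 : (volume.restrict Ω) {x | (f * g) x ≠ 0} = 0 := by
      refine measure_mono_null ?_ hnull
      intro x hx
      simp only [Set.mem_setOf_eq] at hx ⊢
      intro hx0
      exact hx (by rw [Pi.mul_apply, hx0, mul_zero])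
    rw [lorentz21_zero_of_null h2]
    exact zero_le
  by_cases hFt : lorentzNorm 4 2 (volume.restrict Ω) f = ⊤
  · rw [hFt, hcast, ENNReal.mul_top (by norm_num), ENNReal.top_mul hG0]
    exact le_top
  by_cases hGt : lorentzNorm 4 2 (volume.restrict Ω) g = ⊤
  · rw [hGt, ENNReal.mul_top ?_]
    · exact le_top
    · intro h
      rcases mul_eq_zero.mp h with h' | h'
      · rw [hcast] at h'
        norm_num at h'
      · exact hF0 h'
  have hmain := main_est (μ := volume.restrict Ω) (f := f) (g := g)
    (fun u hu => rearr_ne_top hFt hu) (fun u hu => rearr_ne_top hGt hu)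
  rw [hcast]
  exact hmain
end
end
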